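/- arXiv:quant-ph/0106070 — 3 statements merged into one kernel-verified Lean document; each statement's English description precedes it below -/
import Mathlib

section
/- (Neumark's theorem for tight frames) Let φ_1,...,φ_n be a normalized tight frame for an r-dimensional subspace U of a finite-dimensional complex Hilbert space H with dim H ≥ n. Then there exist orthonormal vectors ψ_1,...,ψ_n in H such that P_U ψ_i = φ_i for each i. -/
open Module Submodule

lemma aux_embed0 {E : Type*} [NormedAddCommGroup E] [InnerProductSpace ℂ E]
    [FiniteDimensional ℂ E] (K : Submodule ℂ E)
    {G : Type*} [NormedAddCommGroup G] [InnerProductSpace ℂ G] [FiniteDimensional ℂ G]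
    (hle : Module.finrank ℂ G ≤ Module.finrank ℂ K) :
    ∃ L : G →ₗ[ℂ] E, (∀ x, L x ∈ K) ∧
      ∀ x y : G, (inner ℂ (L x) (L y) : ℂ) = inner ℂ x y := by
  classical
  let b := stdOrthonormalBasis ℂ G
  let c := stdOrthonormalBasis ℂ K
  let cE : Fin (finrank ℂ G) → E := fun a => (c (Fin.castLE hle a) : E)
  have hcE : Orthonormal ℂ cE := by
    have h1 : Orthonormal ℂ (fun a : Fin (finrank ℂ K) => ((c a : E))) := by
      rw [orthonormal_iff_ite]
      intro a1 a2
      rw [← Submodule.coe_inner, orthonormal_iff_ite.1 c.orthonormal]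
    exact h1.comp _ (Fin.castLE_injective hle)
  refine ⟨b.toBasis.constr ℂ cE, fun x => ?_, fun x y => ?_⟩
  · rw [Basis.constr_apply_fintype]
    exact Submodule.sum_mem _ fun a _ => Submodule.smul_mem _ _ (SetLike.coe_mem _)
  · rw [Basis.constr_apply_fintype, Basis.constr_apply_fintype, hcE.inner_sum]
    have h2 := b.repr.inner_map_map x y
    rw [← h2, PiLp.inner_apply]
    refine Finset.sum_congr rfl fun a _ => ?_
    rw [RCLike.inner_apply']; rfl

lemma aux_embed {E F' : Type*} [NormedAddCommGroup E] [InnerProductSpace ℂ E]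
    [FiniteDimensional ℂ E] [NormedAddCommGroup F'] [InnerProductSpace ℂ F']
    [FiniteDimensional ℂ F'] (K : Submodule ℂ E) {nn : ℕ} (v : Fin nn → F')
    (hle : Module.finrank ℂ (span ℂ (Set.range v)) ≤ Module.finrank ℂ K) :
    ∃ χ : Fin nn → E, (∀ i, χ i ∈ K) ∧
      ∀ i j, (inner ℂ (χ i) (χ j) : ℂ) = (inner ℂ (v i) (v j) : ℂ) := by
  obtain ⟨L, hLmem, hLinner⟩ := aux_embed0 K hle
  refine ⟨fun i => L ⟨v i, subset_span (Set.mem_range_self i)⟩, fun i => hLmem _, fun i j => ?_⟩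
  rw [hLinner]
  exact Submodule.coe_inner _ _ _

theorem orthogonalProjection_eq_self_iff {E : Type*} [NormedAddCommGroup E]
    [InnerProductSpace ℂ E] {K : Submodule ℂ E} [K.HasOrthogonalProjection] {v : E} :
    (K.orthogonalProjection v : E) = v ↔ v ∈ K :=
  K.starProjection_eq_self_iff

set_option maxHeartbeats 1000000 in
theorem stmt_6 {E : Type*} [NormedAddCommGroup E] [InnerProductSpace ℂ E]
    [FiniteDimensional ℂ E] (U : Submodule ℂ E) {n r : ℕ}
    (hU : Module.finrank ℂ U = r) (hn : n ≤ Module.finrank ℂ E)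
    (φ : Fin n → E) (hφ : ∀ i, φ i ∈ U)
    (h : ∀ x : E, ∑ i, (inner ℂ (φ i) x : ℂ) • φ i = (U.orthogonalProjection x : E)) :
    ∃ ψ : Fin n → E, Orthonormal ℂ ψ ∧
      ∀ i, (U.orthogonalProjection (ψ i) : E) = φ i := by
  classical
  -- the analysis vectors
  have hproj : ∀ j, ∑ k, (inner ℂ (φ k) (φ j) : ℂ) • φ k = φ j := by
    intro j
    rw [h]
    exact orthogonalProjection_eq_self_iff.2 (hφ j)
  set w : Fin n → (EuclideanSpace ℂ (Fin n)) := fun i => WithLp.toLp 2 (fun k => (inner ℂ (φ k) (φ i) : ℂ)) with hwdef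
  have hwapp : ∀ i k, w i k = (inner ℂ (φ k) (φ i) : ℂ) := fun i k => rfl
  have hG : ∀ i j, (inner ℂ (w i) (w j) : ℂ) = (inner ℂ (φ i) (φ j) : ℂ) := by
    intro i j
    have h1 : (inner ℂ (φ i) (φ j) : ℂ)
        = inner ℂ (φ i) (∑ k, (inner ℂ (φ k) (φ j) : ℂ) • φ k) := by rw [hproj j]
    rw [inner_sum] at h1
    simp_rw [inner_smul_right] at h1
    rw [PiLp.inner_apply]
    simp_rw [RCLike.inner_apply, hwapp]
    rw [h1]
    refine Finset.sum_congr rfl fun k _ => ?_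
    rw [← inner_conj_symm (φ i) (φ k)]
  set v : Fin n → (EuclideanSpace ℂ (Fin n)) := fun i => EuclideanSpace.single i (1 : ℂ) - w i with hvdef
  have hEw : ∀ i j, (inner ℂ (EuclideanSpace.single i (1 : ℂ)) (w j) : ℂ)
      = (inner ℂ (φ i) (φ j) : ℂ) := by
    intro i j
    rw [EuclideanSpace.inner_single_left]
    simp [hwapp]
  have hwE : ∀ i j, (inner ℂ (w i) (EuclideanSpace.single j (1 : ℂ)) : ℂ)
      = (inner ℂ (φ i) (φ j) : ℂ) := by
    intro i j
    rw [EuclideanSpace.inner_single_right]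
    simp [hwapp]
  have hEE : ∀ i j, (inner ℂ (EuclideanSpace.single i (1 : ℂ) : (EuclideanSpace ℂ (Fin n))) ((EuclideanSpace.single j (1 : ℂ) : (EuclideanSpace ℂ (Fin n)))) : ℂ)
      = if i = j then 1 else 0 := by
    intro i j
    rw [EuclideanSpace.inner_single_left]
    simp [EuclideanSpace.single_apply]
  have hvv : ∀ i j, (inner ℂ (v i) (v j) : ℂ)
      = (if i = j then 1 else 0) - (inner ℂ (φ i) (φ j) : ℂ) := by
    intro i j
    rw [hvdef]
    simp only [inner_sub_left, inner_sub_right, hEw, hwE, hEE, hG]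
    ring
  have hwv : ∀ k i, (inner ℂ (w k) (v i) : ℂ) = 0 := by
    intro k i
    rw [hvdef]
    simp only [inner_sub_right, hwE, hG, sub_self]
  -- the analysis operator restricted to U
  set T : E →ₗ[ℂ] (EuclideanSpace ℂ (Fin n)) :=
    (WithLp.linearEquiv 2 ℂ (Fin n → ℂ)).symm.toLinearMap ∘ₗ
      LinearMap.pi (fun k => ((innerSL ℂ (φ k)) : E →ₗ[ℂ] ℂ)) with hTdef
  have hTapp : ∀ x k, T x k = (inner ℂ (φ k) x : ℂ) := fun x k => rfl
  have hTφ : ∀ i, T (φ i) = w i := by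
    intro i
    ext k
    rw [hTapp, hwapp]
  have hUspan : U = span ℂ (Set.range φ) := by
    apply le_antisymm
    · intro x hx
      have hx2 : x = ∑ i, (inner ℂ (φ i) x : ℂ) • φ i := by
        rw [h x, orthogonalProjection_eq_self_iff.2 hx]
      rw [hx2]
      exact sum_mem fun i _ => smul_mem _ _ (subset_span (Set.mem_range_self i))
    · rw [span_le]
      rintro - ⟨i, rfl⟩
      exact hφ i
  have hTinj : Function.Injective (T.domRestrict U) := by
    rw [← LinearMap.ker_eq_bot, eq_bot_iff]
    rintro ⟨x, hx⟩ hker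
    have hker' : T x = 0 := hker
    have hz : ∀ k, (inner ℂ (φ k) x : ℂ) = 0 := by
      intro k
      rw [← hTapp]
      exact congrFun (congrArg (WithLp.equiv 2 (Fin n → ℂ)) hker') k
    have hx0 : x = 0 := by
      have h2 := h x
      simp only [hz, zero_smul, Finset.sum_const_zero] at h2
      rw [← orthogonalProjection_eq_self_iff.2 hx]
      exact h2.symm
    rw [Submodule.mem_bot]
    exact Subtype.ext hx0
  set W : Submodule ℂ (EuclideanSpace ℂ (Fin n)) := span ℂ (Set.range w) with hWdef
  have hWmap : U.map T = W := by
    rw [hWdef, hUspan, Submodule.map_span, ← Set.range_comp]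
    have hc : ⇑T ∘ φ = w := funext hTφ
    rw [hc]
  have hWrank : finrank ℂ W = r := by
    rw [← hWmap, ← LinearMap.range_domRestrict, LinearMap.finrank_range_of_inj hTinj, hU]
  set V : Submodule ℂ (EuclideanSpace ℂ (Fin n)) := span ℂ (Set.range v) with hVdef
  have hVW : V ≤ Wᗮ := by
    rw [span_le]
    rintro - ⟨i, rfl⟩
    rw [SetLike.mem_coe, Submodule.mem_orthogonal]
    intro u hu
    induction hu using Submodule.span_induction with
    | mem y hy => obtain ⟨k, rfl⟩ := hy; exact hwv k i
    | zero => exact inner_zero_left _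
    | add y z _ _ hy hz => rw [inner_add_left, hy, hz, add_zero]
    | smul c y _ hy => rw [inner_smul_left, hy, mul_zero]
  have hFrank : finrank ℂ (EuclideanSpace ℂ (Fin n)) = n := finrank_euclideanSpace_fin
  have hWWperp : finrank ℂ W + finrank ℂ Wᗮ = n := by
    have h1 := Submodule.finrank_add_finrank_orthogonal W
    rw [hFrank] at h1
    exact h1
  have hVrank : finrank ℂ V + r ≤ n := by
    have := Submodule.finrank_mono hVW
    omega
  have hdm : finrank ℂ V ≤ finrank ℂ Uᗮ := by
    have h1 := Submodule.finrank_add_finrank_orthogonal U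
    rw [hU] at h1
    omega
  have hdm' : finrank ℂ (span ℂ (Set.range v)) ≤ finrank ℂ Uᗮ := by
    rw [← hVdef]; exact hdm
  obtain ⟨χ, hχU, hχχ⟩ := aux_embed Uᗮ v hdm'
  refine ⟨fun i => φ i + χ i, ?_, ?_⟩
  · rw [orthonormal_iff_ite]
    intro i j
    rw [inner_add_left, inner_add_right, inner_add_right,
      Submodule.inner_right_of_mem_orthogonal (hφ i) (hχU j),
      Submodule.inner_left_of_mem_orthogonal (hφ j) (hχU i),
      hχχ, hvv]
    ring
  · intro i
    rw [map_add, Submodule.coe_add, orthogonalProjection_eq_self_iff.2 (hφ i),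
      Submodule.orthogonalProjectionOnto_apply_of_mem_orthogonal (hχU i)]
    simp
end

section
/- Let Φ be a k×n complex matrix of rank r with nonzero singular values σ_1,...,σ_r. Among all pairs (F, β) with β > 0 and F F* = β² P_U (U the column space of Φ), the squared Frobenius error Tr((Φ−F)*(Φ−F)) is minimized by β = α := (1/r) Σ_{i=1}^r σ_i and F̂ = α Σ_{i=1}^r u_i v_i*, with minimal error Σ_{i=1}^r (α − σ_i)² = Tr(Φ*Φ) − r α². -/
open Matrix

lemma aux_vmv_mul {m p q : Type*} [Fintype p] (a : m → ℂ) (b : p → ℂ) (c : p → ℂ) (d : q → ℂ) :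
    vecMulVec a b * vecMulVec c d = (b ⬝ᵥ c) • vecMulVec a d := by
  ext i j
  simp [mul_apply, vecMulVec_apply, dotProduct, Finset.sum_mul, Finset.mul_sum]
  refine Finset.sum_congr rfl fun l _ => ?_
  ring

lemma aux_vmv_conjT {m p : Type*} (a : m → ℂ) (b : p → ℂ) :
    (vecMulVec a b)ᴴ = vecMulVec (star b) (star a) := by
  ext i j; simp [vecMulVec_apply, mul_comm]

lemma aux_key {k n r : ℕ} (u : Fin r → Fin k → ℂ) (v : Fin r → Fin n → ℂ)
    (hu : ∀ i j, star (u i) ⬝ᵥ u j = if i = j then (1 : ℂ) else 0) (c d : Fin r → ℂ) :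
    (∑ i, c i • vecMulVec (u i) (star (v i)))ᴴ * (∑ j, d j • vecMulVec (u j) (star (v j)))
      = ∑ i, (star (c i) * d i) • vecMulVec (v i) (star (v i)) := by
  rw [conjTranspose_sum]
  simp only [conjTranspose_smul, aux_vmv_conjT, star_star]
  rw [Matrix.sum_mul]
  simp_rw [Matrix.mul_sum]
  have h : ∀ i j, (star (c i) • vecMulVec (v i) (star (u i))) * (d j • vecMulVec (u j) (star (v j)))
      = (if i = j then (star (c i) * d j) • vecMulVec (v i) (star (v j)) else 0) := by
    intro i j
    rw [Matrix.smul_mul, Matrix.mul_smul, aux_vmv_mul, hu, smul_smul, smul_smul]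
    split <;> simp
  simp only [h]
  simp

lemma aux_key2 {k n r : ℕ} (u : Fin r → Fin k → ℂ) (v : Fin r → Fin n → ℂ)
    (hv : ∀ i j, star (v i) ⬝ᵥ v j = if i = j then (1 : ℂ) else 0) (c d : Fin r → ℂ) :
    (∑ i, c i • vecMulVec (u i) (star (v i))) * (∑ j, d j • vecMulVec (u j) (star (v j)))ᴴ
      = ∑ i, (c i * star (d i)) • vecMulVec (u i) (star (u i)) := by
  rw [conjTranspose_sum]
  simp only [conjTranspose_smul, aux_vmv_conjT, star_star]
  rw [Matrix.sum_mul]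
  simp_rw [Matrix.mul_sum]
  have h : ∀ i j, (c i • vecMulVec (u i) (star (v i))) * (star (d j) • vecMulVec (v j) (star (u j)))
      = (if i = j then (c i * star (d j)) • vecMulVec (u i) (star (u j)) else 0) := by
    intro i j
    rw [Matrix.smul_mul, Matrix.mul_smul, aux_vmv_mul, hv, smul_smul, smul_smul]
    split <;> simp
  simp only [h]
  simp

lemma aux_trace_vmv {m : Type*} [Fintype m] (a b : m → ℂ) :
    trace (vecMulVec a b) = a ⬝ᵥ b := by
  simp [trace, diag, vecMulVec_apply, dotProduct]

lemma aux_trace_mul_vmv {m p : Type*} [Fintype m] [Fintype p]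
    (A : Matrix p m ℂ) (x : m → ℂ) (y : p → ℂ) :
    trace (A * vecMulVec x y) = y ⬝ᵥ (A *ᵥ x) := by
  simp [trace, diag, mul_apply, vecMulVec_apply, dotProduct, mulVec, Finset.mul_sum]
  refine Finset.sum_congr rfl fun i _ => Finset.sum_congr rfl fun j _ => ?_
  ring

lemma aux_vmv_mulVec {m p : Type*} [Fintype p] (a : m → ℂ) (b : p → ℂ) (x : p → ℂ) :
    vecMulVec a b *ᵥ x = (b ⬝ᵥ x) • a := by
  ext i; simp [mulVec, vecMulVec_apply, dotProduct, Finset.mul_sum]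
  rw [Finset.sum_mul]
  refine Finset.sum_congr rfl fun j _ => ?_
  ring

lemma aux_sum_mulVec {ι m p : Type*} [Fintype p] (s : Finset ι)
    (M : ι → Matrix m p ℂ) (x : p → ℂ) :
    (∑ i ∈ s, M i) *ᵥ x = ∑ i ∈ s, M i *ᵥ x := by
  ext j
  simp [mulVec, dotProduct, Finset.sum_mul, Finset.sum_apply, Matrix.sum_apply]
  exact Finset.sum_comm

lemma EuclideanSpace.inner_piLp_equiv_symm {𝕜 ι : Type*} [RCLike 𝕜] [Fintype ι] (x y : ι → 𝕜) :
    inner 𝕜 ((WithLp.equiv 2 (ι → 𝕜)).symm x) ((WithLp.equiv 2 (ι → 𝕜)).symm y) = star x ⬝ᵥ y := by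
  rw [dotProduct_comm]; rfl

lemma aux_cs {m : ℕ} (x y : Fin m → ℂ) :
    (star x ⬝ᵥ y).re ≤ Real.sqrt (star x ⬝ᵥ x).re * Real.sqrt (star y ⬝ᵥ y).re := by
  have h1 := EuclideanSpace.inner_piLp_equiv_symm (𝕜 := ℂ) (ι := Fin m) x y
  have h2 := norm_inner_le_norm (𝕜 := ℂ) ((WithLp.equiv 2 _).symm x) ((WithLp.equiv 2 _).symm y)
  rw [h1] at h2
  have hre : (star x ⬝ᵥ y).re ≤ ‖star x ⬝ᵥ y‖ := Complex.re_le_norm _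
  have hx : ‖(WithLp.equiv 2 (Fin m → ℂ)).symm x‖ = Real.sqrt (star x ⬝ᵥ x).re := by
    rw [norm_eq_sqrt_re_inner (𝕜 := ℂ), EuclideanSpace.inner_piLp_equiv_symm]; rfl
  have hy : ‖(WithLp.equiv 2 (Fin m → ℂ)).symm y‖ = Real.sqrt (star y ⬝ᵥ y).re := by
    rw [norm_eq_sqrt_re_inner (𝕜 := ℂ), EuclideanSpace.inner_piLp_equiv_symm]; rfl
  rw [hx, hy] at h2
  exact hre.trans h2

theorem stmt_9 {k n r : ℕ} (Φ : Matrix (Fin k) (Fin n) ℂ) (hr : Φ.rank = r)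
    (u : Fin r → Fin k → ℂ) (v : Fin r → Fin n → ℂ) (σ : Fin r → ℝ)
    (hu : ∀ i j, star (u i) ⬝ᵥ u j = if i = j then (1 : ℂ) else 0)
    (hv : ∀ i j, star (v i) ⬝ᵥ v j = if i = j then (1 : ℂ) else 0)
    (hσ : ∀ i, 0 < σ i)
    (hΦ : Φ = ∑ i, (σ i : ℂ) • vecMulVec (u i) (star (v i)))
    (α : ℝ) (hα : α = (1 / r : ℝ) * ∑ i, σ i) :
    ((α : ℂ) • ∑ i, vecMulVec (u i) (star (v i))) *
        ((α : ℂ) • ∑ i, vecMulVec (u i) (star (v i)))ᴴ =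
      ((α : ℂ) ^ 2) • ∑ i, vecMulVec (u i) (star (u i)) ∧
    Matrix.trace ((Φ - (α : ℂ) • ∑ i, vecMulVec (u i) (star (v i)))ᴴ *
        (Φ - (α : ℂ) • ∑ i, vecMulVec (u i) (star (v i)))) =
      ((∑ i, (α - σ i) ^ 2 : ℝ) : ℂ) ∧
    (∑ i, (α - σ i) ^ 2 : ℝ) = (Matrix.trace (Φᴴ * Φ)).re - r * α ^ 2 ∧
    ∀ (β : ℝ), 0 < β → ∀ F : Matrix (Fin k) (Fin n) ℂ,
      F * Fᴴ = ((β : ℂ) ^ 2) • ∑ i, vecMulVec (u i) (star (u i)) →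
      (∑ i, (α - σ i) ^ 2 : ℝ) ≤ (Matrix.trace ((Φ - F)ᴴ * (Φ - F))).re := by
  have husum : ∑ i, σ i = r * α := by
    rcases Nat.eq_zero_or_pos r with h0 | hpos
    · subst h0; simp
    · have hr0 : (r : ℝ) ≠ 0 := by positivity
      rw [hα]; field_simp
  have hvv : ∀ i, v i ⬝ᵥ star (v i) = (1 : ℂ) := fun i => by
    rw [dotProduct_comm]; simpa using hv i i
  have huu : ∀ i, u i ⬝ᵥ star (u i) = (1 : ℂ) := fun i => by
    rw [dotProduct_comm]; simpa using hu i i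
  have hsmulS : (α : ℂ) • (∑ i, vecMulVec (u i) (star (v i)))
      = ∑ i, (α : ℂ) • vecMulVec (u i) (star (v i)) := Finset.smul_sum
  have c1 : ((α : ℂ) • ∑ i, vecMulVec (u i) (star (v i))) *
        ((α : ℂ) • ∑ i, vecMulVec (u i) (star (v i)))ᴴ =
      ((α : ℂ) ^ 2) • ∑ i, vecMulVec (u i) (star (u i)) := by
    rw [hsmulS, aux_key2 u v hv, Finset.smul_sum]
    refine Finset.sum_congr rfl fun i _ => ?_
    congr 1
    rw [Complex.star_def, Complex.conj_ofReal]; ring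
  have hdiff : Φ - (α : ℂ) • (∑ i, vecMulVec (u i) (star (v i)))
      = ∑ i, (((σ i - α : ℝ)) : ℂ) • vecMulVec (u i) (star (v i)) := by
    rw [hΦ, hsmulS, ← Finset.sum_sub_distrib]
    refine Finset.sum_congr rfl fun i _ => ?_
    rw [← sub_smul]
    norm_num
  have c2 : Matrix.trace ((Φ - (α : ℂ) • ∑ i, vecMulVec (u i) (star (v i)))ᴴ *
        (Φ - (α : ℂ) • ∑ i, vecMulVec (u i) (star (v i)))) =
      ((∑ i, (α - σ i) ^ 2 : ℝ) : ℂ) := by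
    rw [hdiff, aux_key u v hu, trace_sum]
    simp only [trace_smul, aux_trace_vmv, hvv, smul_eq_mul, mul_one]
    rw [Complex.ofReal_sum]
    refine Finset.sum_congr rfl fun i _ => ?_
    rw [Complex.star_def, Complex.conj_ofReal]
    push_cast; ring
  have hTr : Matrix.trace (Φᴴ * Φ) = ((∑ i, (σ i) ^ 2 : ℝ) : ℂ) := by
    rw [hΦ, aux_key u v hu, trace_sum]
    simp only [trace_smul, aux_trace_vmv, hvv, smul_eq_mul, mul_one]
    rw [Complex.ofReal_sum]
    refine Finset.sum_congr rfl fun i _ => ?_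
    rw [Complex.star_def, Complex.conj_ofReal]
    push_cast; ring
  have c3real : (∑ i, (α - σ i) ^ 2 : ℝ) = (∑ i, (σ i) ^ 2) - r * α ^ 2 := by
    have expand : (∑ i, (α - σ i) ^ 2 : ℝ)
        = (∑ i, (σ i) ^ 2) - 2 * α * (∑ i, σ i) + r * α ^ 2 := by
      rw [Finset.sum_congr rfl
        (fun i _ => by ring : ∀ i ∈ Finset.univ, (α - σ i) ^ 2 = σ i ^ 2 - 2 * α * σ i + α ^ 2)]
      rw [Finset.sum_add_distrib, Finset.sum_sub_distrib, ← Finset.mul_sum,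
        Finset.sum_const, Finset.card_univ, Fintype.card_fin, nsmul_eq_mul]
    rw [expand, husum]; ring
  refine ⟨c1, c2, ?_, ?_⟩
  · rw [hTr, Complex.ofReal_re]; exact c3real
  intro β hβ F hF
  have hPtr : Matrix.trace (∑ i, vecMulVec (u i) (star (u i))) = (r : ℂ) := by
    rw [trace_sum]
    simp [aux_trace_vmv, huu]
  have hPu : ∀ i0, (∑ i, vecMulVec (u i) (star (u i))) *ᵥ u i0 = u i0 := by
    intro i0
    rw [aux_sum_mulVec]
    simp only [aux_vmv_mulVec, hu]
    simp
  have hwnorm : ∀ i0, star (Fᴴ *ᵥ u i0) ⬝ᵥ (Fᴴ *ᵥ u i0) = ((β ^ 2 : ℝ) : ℂ) := by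
    intro i0
    rw [star_mulVec, conjTranspose_conjTranspose, ← dotProduct_mulVec, mulVec_mulVec,
      hF, smul_mulVec, hPu, dotProduct_smul]
    have := hu i0 i0
    simp only [if_pos rfl] at this
    rw [this]
    push_cast
    simp
  have hcs : ∀ i0, (star (v i0) ⬝ᵥ (Fᴴ *ᵥ u i0)).re ≤ β := by
    intro i0
    have h := aux_cs (v i0) (Fᴴ *ᵥ u i0)
    rw [hwnorm i0] at h
    have hv1 : (star (v i0) ⬝ᵥ v i0) = (1 : ℂ) := by simpa using hv i0 i0
    rw [hv1] at h
    simpa [← Complex.ofReal_pow, Real.sqrt_sq hβ.le] using h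
  have hFΦ : Matrix.trace (Fᴴ * Φ) = ∑ i, (σ i : ℂ) * (star (v i) ⬝ᵥ (Fᴴ *ᵥ u i)) := by
    rw [hΦ, Matrix.mul_sum, trace_sum]
    simp only [Matrix.mul_smul, trace_smul, aux_trace_mul_vmv, smul_eq_mul]
  have hFF : Matrix.trace (Fᴴ * F) = ((r * β ^ 2 : ℝ) : ℂ) := by
    rw [trace_mul_comm, hF, trace_smul, hPtr]
    push_cast [smul_eq_mul]; ring
  have hexp : ((Φ - F)ᴴ * (Φ - F)) = Φᴴ * Φ - Φᴴ * F - Fᴴ * Φ + Fᴴ * F := by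
    rw [conjTranspose_sub, Matrix.sub_mul, Matrix.mul_sub, Matrix.mul_sub]
    abel
  have hconj : Matrix.trace (Φᴴ * F) = star (Matrix.trace (Fᴴ * Φ)) := by
    rw [← trace_conjTranspose, conjTranspose_mul, conjTranspose_conjTranspose]
  have hre : (Matrix.trace ((Φ - F)ᴴ * (Φ - F))).re
      = (∑ i, (σ i) ^ 2) - 2 * (Matrix.trace (Fᴴ * Φ)).re + r * β ^ 2 := by
    rw [hexp, trace_add, trace_sub, trace_sub, hconj, hTr, hFF]
    simp only [Complex.add_re, Complex.sub_re, Complex.ofReal_re, Complex.star_def,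
      Complex.conj_re]
    ring
  have hXbound : (Matrix.trace (Fᴴ * Φ)).re ≤ r * α * β := by
    rw [hFΦ]
    rw [Complex.re_sum]
    have step : ∀ i ∈ Finset.univ, ((σ i : ℂ) * (star (v i) ⬝ᵥ (Fᴴ *ᵥ u i))).re ≤ σ i * β := by
      intro i _
      rw [Complex.re_ofReal_mul]
      exact mul_le_mul_of_nonneg_left (hcs i) (hσ i).le
    calc ∑ i, ((σ i : ℂ) * (star (v i) ⬝ᵥ (Fᴴ *ᵥ u i))).re
        ≤ ∑ i, σ i * β := Finset.sum_le_sum step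
      _ = (∑ i, σ i) * β := by rw [Finset.sum_mul]
      _ = r * α * β := by rw [husum]
  rw [c3real, hre]
  nlinarith [hXbound, mul_nonneg (Nat.cast_nonneg (α := ℝ) r) (sq_nonneg (α - β))]
end

section
/- If Φ is a k×n complex matrix of rank r with column space U, then the canonical frame matrix F = Φ((Φ*Φ)^{1/2})^† satisfies F F* = P_U; that is, the columns of F form a normalized tight frame for U. -/
open Matrix
open scoped ComplexOrder

/-- `P` is the matrix of the orthogonal projection onto the subspace `V`. -/
def IsOrthProjOn {m : ℕ} (P : Matrix (Fin m) (Fin m) ℂ)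
    (V : Submodule ℂ (Fin m → ℂ)) : Prop :=
  Pᴴ = P ∧ P * P = P ∧ LinearMap.range P.mulVecLin = V

/-- `B` is a Moore–Penrose pseudoinverse of `A`. -/
def IsMoorePenrose {m n : ℕ} (A : Matrix (Fin m) (Fin n) ℂ)
    (B : Matrix (Fin n) (Fin m) ℂ) : Prop :=
  A * B * A = A ∧ B * A * B = B ∧ (A * B)ᴴ = A * B ∧ (B * A)ᴴ = B * A

/-- The positive semidefinite square root of a positive semidefinite matrix
(the definition of `Matrix.PosSemidef.sqrt` from the older Mathlib, since removed). -/
noncomputable def Matrix.PosSemidef.sqrt {n : Type*} {𝕜 : Type*} [Fintype n] [RCLike 𝕜]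
    [DecidableEq n] {A : Matrix n n 𝕜} (hA : A.PosSemidef) : Matrix n n 𝕜 :=
  hA.1.eigenvectorUnitary.1 * diagonal ((↑) ∘ (√·) ∘ hA.1.eigenvalues) *
  (star hA.1.eigenvectorUnitary : Matrix n n 𝕜)

lemma psd_sqrt_herm {n : Type*} {𝕜 : Type*} [Fintype n] [RCLike 𝕜]
    [DecidableEq n] {A : Matrix n n 𝕜} (hA : A.PosSemidef) : hA.sqrt ᴴ = hA.sqrt := by
  unfold Matrix.PosSemidef.sqrt
  have hd : star (((↑) ∘ (√·) ∘ hA.1.eigenvalues) : n → 𝕜) = ((↑) ∘ (√·) ∘ hA.1.eigenvalues) := by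
    funext i
    simp
  rw [conjTranspose_mul, conjTranspose_mul, diagonal_conjTranspose, hd, Matrix.mul_assoc]
  rw [← Matrix.star_eq_conjTranspose, ← Matrix.star_eq_conjTranspose, star_star]

lemma psd_sqrt_mul_self {n : Type*} {𝕜 : Type*} [Fintype n] [RCLike 𝕜]
    [DecidableEq n] {A : Matrix n n 𝕜} (hA : A.PosSemidef) : hA.sqrt * hA.sqrt = A := by
  unfold Matrix.PosSemidef.sqrt
  conv_rhs => rw [hA.1.spectral_theorem, Unitary.conjStarAlgAut_apply]
  have hU : (star hA.1.eigenvectorUnitary : Matrix n n 𝕜) * hA.1.eigenvectorUnitary.1 = 1 :=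
    Unitary.coe_star_mul_self _
  rw [show hA.1.eigenvectorUnitary.1 * diagonal ((↑) ∘ (√·) ∘ hA.1.eigenvalues) *
      (star hA.1.eigenvectorUnitary : Matrix n n 𝕜) *
      (hA.1.eigenvectorUnitary.1 * diagonal ((↑) ∘ (√·) ∘ hA.1.eigenvalues) *
      (star hA.1.eigenvectorUnitary : Matrix n n 𝕜)) =
      hA.1.eigenvectorUnitary.1 * diagonal ((↑) ∘ (√·) ∘ hA.1.eigenvalues) *
      ((star hA.1.eigenvectorUnitary : Matrix n n 𝕜) * hA.1.eigenvectorUnitary.1) *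
      diagonal ((↑) ∘ (√·) ∘ hA.1.eigenvalues) *
      (star hA.1.eigenvectorUnitary : Matrix n n 𝕜) by simp only [Matrix.mul_assoc], hU,
    Matrix.mul_one, Matrix.mul_assoc _ (diagonal _) (diagonal _), diagonal_mul_diagonal]
  congr 3
  funext i
  simp only [Function.comp_apply]
  rw [← RCLike.ofReal_mul, Real.mul_self_sqrt (hA.eigenvalues_nonneg i)]

/-- Uniqueness of the Moore–Penrose pseudoinverse. -/
lemma mp_unique {m n : ℕ} {A : Matrix (Fin m) (Fin n) ℂ}
    {B C : Matrix (Fin n) (Fin m) ℂ}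
    (hB : IsMoorePenrose A B) (hC : IsMoorePenrose A C) : B = C := by
  obtain ⟨hB1, hB2, hB3, hB4⟩ := hB
  obtain ⟨hC1, hC2, hC3, hC4⟩ := hC
  have hAB : A * B = A * C := by
    calc A * B = (A * C) * (A * B) := by rw [← Matrix.mul_assoc, hC1]
    _ = (A * C)ᴴ * (A * B)ᴴ := by rw [hC3, hB3]
    _ = ((A * B) * (A * C))ᴴ := (conjTranspose_mul _ _).symm
    _ = (A * C)ᴴ := by
        rw [show (A * B) * (A * C) = (A * B * A) * C by simp only [Matrix.mul_assoc], hB1]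
    _ = A * C := hC3
  have hBA : B * A = C * A := by
    calc B * A = (B * A) * (C * A) := by
          rw [show (B * A) * (C * A) = B * (A * C * A) by simp only [Matrix.mul_assoc], hC1]
    _ = (B * A)ᴴ * (C * A)ᴴ := by rw [hB4, hC4]
    _ = ((C * A) * (B * A))ᴴ := (conjTranspose_mul _ _).symm
    _ = (C * A)ᴴ := by
        rw [show (C * A) * (B * A) = C * (A * B * A) by simp only [Matrix.mul_assoc], hB1]
    _ = C * A := hC4
  calc B = B * A * B := hB2.symm
  _ = C * A * C := by rw [hBA, Matrix.mul_assoc, hAB, ← Matrix.mul_assoc]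
  _ = C := hC2

theorem stmt_12 {k n r : ℕ} (Φ : Matrix (Fin k) (Fin n) ℂ) (hr : Φ.rank = r)
    (B : Matrix (Fin n) (Fin n) ℂ)
    (hB : IsMoorePenrose (Matrix.posSemidef_conjTranspose_mul_self Φ).sqrt B) :
    IsOrthProjOn ((Φ * B) * (Φ * B)ᴴ) (LinearMap.range Φ.mulVecLin) := by
  set S := (Matrix.posSemidef_conjTranspose_mul_self Φ).sqrt with hSdef
  have hS1 : Sᴴ = S := psd_sqrt_herm (Matrix.posSemidef_conjTranspose_mul_self Φ)
  have hS2 : S * S = Φᴴ * Φ := psd_sqrt_mul_self (Matrix.posSemidef_conjTranspose_mul_self Φ)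
  obtain ⟨hB1, hB2, hB3, hB4⟩ := hB
  clear_value S
  -- B is Hermitian, by uniqueness of the pseudoinverse
  have hBh : Bᴴ = B := by
    refine mp_unique (A := S) ?_ ⟨hB1, hB2, hB3, hB4⟩
    refine ⟨?_, ?_, ?_, ?_⟩
    · have := congrArg conjTranspose hB1
      simp only [conjTranspose_mul, hS1] at this
      rw [Matrix.mul_assoc]; exact this
    · have := congrArg conjTranspose hB2
      simp only [conjTranspose_mul, hS1] at this
      rw [Matrix.mul_assoc]; exact this
    · rw [conjTranspose_mul, conjTranspose_conjTranspose, hS1, ← hB4, conjTranspose_mul, hS1]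
    · rw [conjTranspose_mul, conjTranspose_conjTranspose, hS1, ← hB3, conjTranspose_mul, hS1]
  -- S and B commute
  have hcomm : S * B = B * S := by
    have : (B * S)ᴴ = S * B := by rw [conjTranspose_mul, hS1, hBh]
    rw [← this, hB4]
  -- key identity : Φ * B * S = Φ
  have hkey : Φ * (B * S) = Φ := by
    have h0 : (Φ * (B * S) - Φ)ᴴ * (Φ * (B * S) - Φ) = 0 := by
      have e1 : S * B * (S * S) * (B * S) = S * S := by
        rw [show S * B * (S * S) * (B * S) = (S * B * S) * (S * B * S) by simp only [Matrix.mul_assoc], hB1]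
      have e2 : S * B * (S * S) = S * S := by
        rw [show S * B * (S * S) = (S * B * S) * S by simp only [Matrix.mul_assoc], hB1]
      have e3 : (S * S) * (B * S) = S * S := by
        rw [show (S * S) * (B * S) = S * (S * B * S) by simp only [Matrix.mul_assoc], hB1]
      rw [conjTranspose_sub, conjTranspose_mul, conjTranspose_mul, hS1, hBh]
      rw [Matrix.sub_mul, Matrix.mul_sub, Matrix.mul_sub]
      rw [show S * B * Φᴴ * (Φ * (B * S)) = S * B * (Φᴴ * Φ) * (B * S) by simp only [Matrix.mul_assoc],
        show S * B * Φᴴ * Φ = S * B * (Φᴴ * Φ) by simp only [Matrix.mul_assoc],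
        show Φᴴ * (Φ * (B * S)) = (Φᴴ * Φ) * (B * S) by simp only [Matrix.mul_assoc],
        ← hS2, e1, e2, e3]
      simp
    have := (Matrix.conjTranspose_mul_self_eq_zero (A := Φ * (B * S) - Φ)).mp h0
    exact sub_eq_zero.mp this
  have hcomm' : B * S = S * B := hcomm.symm
  -- (ΦB)ᴴ(ΦB) = B S
  have hFF : (Φ * B)ᴴ * (Φ * B) = B * S := by
    rw [conjTranspose_mul, hBh,
      show B * Φᴴ * (Φ * B) = B * (Φᴴ * Φ) * B by simp only [Matrix.mul_assoc], ← hS2,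
      show B * (S * S) * B = (B * S) * (S * B) by simp only [Matrix.mul_assoc], ← hcomm,
      show S * B * (S * B) = S * (B * S * B) by simp only [Matrix.mul_assoc], hB2, hcomm]
  -- B B S = B
  have hBBS : B * (B * S) = B := by
    rw [hcomm', show B * (S * B) = B * S * B by simp only [Matrix.mul_assoc], hB2]
  -- the projection fixes Φ
  have hfix : ((Φ * B) * (Φ * B)ᴴ) * Φ = Φ := by
    rw [conjTranspose_mul, hBh,
      show Φ * B * (B * Φᴴ) * Φ = Φ * (B * (B * (Φᴴ * Φ))) by simp only [Matrix.mul_assoc], ← hS2,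
      show B * (B * (S * S)) = (B * (B * S)) * S by simp only [Matrix.mul_assoc], hBBS, hkey]
  refine ⟨?_, ?_, ?_⟩
  · rw [conjTranspose_mul, conjTranspose_conjTranspose]
  · rw [show (Φ * B) * (Φ * B)ᴴ * ((Φ * B) * (Φ * B)ᴴ)
        = (Φ * B) * ((Φ * B)ᴴ * (Φ * B)) * (Φ * B)ᴴ by simp only [Matrix.mul_assoc], hFF,
      show Φ * B * (B * S) = Φ * (B * (B * S)) by simp only [Matrix.mul_assoc], hBBS]
  · apply le_antisymm
    · rintro x ⟨v, rfl⟩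
      refine ⟨(B * (Φ * B)ᴴ).mulVecLin v, ?_⟩
      simp only [mulVecLin_apply, ← mulVec_mulVec]
    · rintro x ⟨v, rfl⟩
      refine ⟨Φ.mulVecLin v, ?_⟩
      simp only [mulVecLin_apply, mulVec_mulVec, hfix]
end
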